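/- arXiv:1512.00001 — 9 statements merged into one kernel-verified Lean document; each statement's English description precedes it below -/
import Mathlib

section
/- Let Ω be a measurable space and μ a probability measure on Ω × Bool. Let λ be the pushforward of μ under the first projection, let ν be the measure on Ω defined by ν(A) = μ(A × {true}), and let η : Ω → ℝ be the (λ-a.e. defined, [0,1]-valued) Radon–Nikodym derivative of ν with respect to λ. Define the Bayes classifier g* : Ω → Bool by g*(x) = true if and only if η(x) ≥ 1/2. Then for every measurable classifier g : Ω → Bool, μ{(x,y) : g*(x) ≠ y} ≤ μ{(x,y) : g(x) ≠ y}. -/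
/-!
Write `f = dν/dλ`. Since `μ (A ×ˢ {true}) = ∫⁻ x in A, f x ∂λ` and `μ (A ×ˢ {false}) = λ A - ν A =
∫⁻ x in A, 1 - f x ∂λ`, the error of a classifier `h` is `∫⁻ x, (if h x then 1 - f x else f x) ∂λ`.
The Bayes classifier minimises the integrand at every point, as `f x ≥ 1/2` exactly when
`1 - f x ≤ f x`.
-/

open MeasureTheory Set ENNReal

lemma setOf_ne_snd_eq_union {Ω : Type*} (h : Ω → Bool) :
    {p : Ω × Bool | h p.1 ≠ p.2} =
      {x | h x = false} ×ˢ {true} ∪ {x | h x = true} ×ˢ {false} := by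
  ext ⟨x, y⟩
  cases y <;> simp

section LabelledMeasure

variable {Ω : Type*} [MeasurableSpace Ω] (μ : Measure (Ω × Bool))

lemma lintegral_cond {m : Measure Ω} {h : Ω → Bool} (hh : Measurable h) (u v : Ω → ℝ≥0∞) :
    ∫⁻ x, cond (h x) (u x) (v x) ∂m =
      ∫⁻ x in {x | h x = true}, u x ∂m + ∫⁻ x in {x | h x = false}, v x ∂m := by
  have hA : MeasurableSet {x | h x = true} := hh (measurableSet_singleton true)
  have hAc : {x | h x = true}ᶜ = {x | h x = false} := by ext; simp
  rw [← lintegral_add_compl _ hA, hAc]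
  congr 1
  · exact setLIntegral_congr_fun hA fun x hx => by simp_all
  · exact setLIntegral_congr_fun (hAc ▸ hA.compl) fun x hx => by simp_all

lemma measure_setOf_ne_snd {h : Ω → Bool} (hh : Measurable h) :
    μ {p | h p.1 ≠ p.2} =
      μ ({x | h x = false} ×ˢ {true}) + μ ({x | h x = true} ×ˢ {false}) := by
  rw [setOf_ne_snd_eq_union]
  exact measure_union (disjoint_prod.2 (Or.inr (by simp)))
    ((hh (measurableSet_singleton true)).prod (measurableSet_singleton false))

lemma map_fst_apply_eq_add {A : Set Ω} (hA : MeasurableSet A) :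
    μ.map Prod.fst A = μ (A ×ˢ {true}) + μ (A ×ˢ {false}) := by
  rw [Measure.map_apply measurable_fst hA, ← measure_union
    (disjoint_prod.2 (Or.inr (by simp))) (hA.prod (measurableSet_singleton false))]
  congr 1
  ext ⟨x, y⟩
  cases y <;> simp

variable {μ} {ν : Measure Ω}

lemma le_map_fst_of_apply_eq (hν : ∀ A, MeasurableSet A → ν A = μ (A ×ˢ {true})) :
    ν ≤ μ.map Prod.fst :=
  Measure.le_iff.2 fun A hA => by
    rw [hν A hA, map_fst_apply_eq_add μ hA]
    exact le_self_add

variable [IsFiniteMeasure μ]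

lemma measure_prod_true_eq_setLIntegral (hν : ∀ A, MeasurableSet A → ν A = μ (A ×ˢ {true}))
    {A : Set Ω} (hA : MeasurableSet A) :
    μ (A ×ˢ {true}) = ∫⁻ x in A, ν.rnDeriv (μ.map Prod.fst) x ∂μ.map Prod.fst := by
  have hle := le_map_fst_of_apply_eq hν
  have : IsFiniteMeasure ν := isFiniteMeasure_of_le _ hle
  rw [Measure.setLIntegral_rnDeriv' hle.absolutelyContinuous hA, hν A hA]

lemma measure_prod_false_eq_setLIntegral (hν : ∀ A, MeasurableSet A → ν A = μ (A ×ˢ {true}))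
    {A : Set Ω} (hA : MeasurableSet A) :
    μ (A ×ˢ {false}) =
      ∫⁻ x in A, 1 - ν.rnDeriv (μ.map Prod.fst) x ∂μ.map Prod.fst := by
  rw [lintegral_sub' (Measure.measurable_rnDeriv _ _).aemeasurable, setLIntegral_one,
    ← measure_prod_true_eq_setLIntegral hν hA, map_fst_apply_eq_add μ hA,
    ENNReal.add_sub_cancel_left (measure_ne_top _ _)]
  · rw [← measure_prod_true_eq_setLIntegral hν hA]
    exact measure_ne_top _ _
  · exact ae_restrict_of_ae (Measure.rnDeriv_le_one_of_le (le_map_fst_of_apply_eq hν))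

lemma measure_setOf_ne_snd_eq_lintegral
    (hν : ∀ A, MeasurableSet A → ν A = μ (A ×ˢ {true})) {h : Ω → Bool} (hh : Measurable h) :
    μ {p | h p.1 ≠ p.2} = ∫⁻ x, cond (h x) (1 - ν.rnDeriv (μ.map Prod.fst) x)
      (ν.rnDeriv (μ.map Prod.fst) x) ∂μ.map Prod.fst := by
  have hA (b : Bool) : MeasurableSet {x | h x = b} := hh (measurableSet_singleton b)
  rw [measure_setOf_ne_snd μ hh, add_comm, measure_prod_true_eq_setLIntegral hν (hA false),
    measure_prod_false_eq_setLIntegral hν (hA true), lintegral_cond hh]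

end LabelledMeasure

lemma cond_tsub_self_le {a : ℝ≥0∞} {b : Bool} (hb : b = true ↔ 2⁻¹ ≤ a)
    (c : Bool) : cond b (1 - a) a ≤ cond c (1 - a) a := by
  cases b <;> cases c
  all_goals simp only [cond_true, cond_false, le_refl]
  · have ha : a ≤ 2⁻¹ := (not_le.1 (by simpa using hb)).le
    calc a ≤ 2⁻¹ := ha
      _ = 1 - 2⁻¹ := one_sub_inv_two.symm
      _ ≤ 1 - a := tsub_le_tsub_left ha 1
  · calc 1 - a ≤ 1 - 2⁻¹ := tsub_le_tsub_left (hb.1 rfl) 1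
      _ = 2⁻¹ := one_sub_inv_two
      _ ≤ a := hb.1 rfl

/-- Optimality of the Bayes classifier: the classifier `g*` defined from the
regression function `η = dν/dλ` by `g*(x) = true ↔ η(x) ≥ 1/2` has
misclassification error no larger than that of any measurable classifier. -/
theorem bayes_classifier_optimal
    {Ω : Type*} [MeasurableSpace Ω]
    (μ : Measure (Ω × Bool)) [IsProbabilityMeasure μ]
    (lam : Measure Ω) (hlam : lam = μ.map Prod.fst)
    (ν : Measure Ω)
    (hν : ∀ A : Set Ω, MeasurableSet A → ν A = μ (A ×ˢ ({true} : Set Bool)))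
    (η : Ω → ℝ) (hη : ∀ x, η x = (ν.rnDeriv lam x).toReal)
    (gstar : Ω → Bool) (hgstar : ∀ x, gstar x = true ↔ (1/2 : ℝ) ≤ η x)
    (g : Ω → Bool) (hg : Measurable g) :
    μ {p : Ω × Bool | gstar p.1 ≠ p.2} ≤ μ {p : Ω × Bool | g p.1 ≠ p.2} := by
  subst hlam
  have hη_meas : Measurable η := by
    rw [funext hη]
    exact (Measure.measurable_rnDeriv _ _).ennreal_toReal
  have hgstar_meas : Measurable gstar := measurable_to_bool <| by
    simpa only [preimage, mem_singleton_iff, hgstar] using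
      measurableSet_le measurable_const hη_meas
  rw [measure_setOf_ne_snd_eq_lintegral hν hgstar_meas, measure_setOf_ne_snd_eq_lintegral hν hg]
  refine lintegral_mono_ae ?_
  filter_upwards [Measure.rnDeriv_le_one_of_le (le_map_fst_of_apply_eq hν)] with x hx
  refine cond_tsub_self_le ?_ (g x)
  rw [hgstar, hη, ← ENNReal.ofReal_le_iff_le_toReal (hx.trans_lt one_lt_top).ne, one_div,
    ENNReal.ofReal_inv_of_pos two_pos, ENNReal.ofReal_ofNat]
end

section
/- Let Ω be a measurable space and μ a probability measure on Ω × Bool, with λ, ν, η, and the Bayes classifier g* defined as usual. Let ηₙ : Ω → ℝ be any measurable function, and define the plug-in classifier gₙ : Ω → Bool by gₙ(x) = true if and only if ηₙ(x) ≥ 1/2. Then μ{(x,y) : gₙ(x) ≠ y} − μ{(x,y) : g*(x) ≠ y} ≤ 2 ∫ |η(x) − ηₙ(x)| dλ(x). -/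
open MeasureTheory
open scoped ENNReal

/-!
Disintegrating `μ` over its first marginal `λ`, the error of a classifier `g` is
`∫ r(g x, η x) dλ`, where the conditional risk `r(b, t)` is `1 - t` or `t` according as `b` is
`true` or `false`. Where `gₙ` and `g*` agree the integrands coincide; where they disagree, `η` and
`ηₙ` lie on opposite sides of `1/2`, so `r(gₙ x, η x) - r(g* x, η x) = |2 η x - 1| ≤ 2 |η x - ηₙ x|`.
-/

/-- The probability of misclassifying a point whose regression value is `t` when predicting `b`. -/
def condRisk (b : Bool) (t : ℝ) : ℝ := if b then 1 - t else t

lemma condRisk_le_of_threshold {b bstar : Bool} {s t : ℝ}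
    (hb : b = true ↔ 1/2 ≤ s) (hbstar : bstar = true ↔ 1/2 ≤ t) :
    condRisk b t ≤ 2 * |t - s| + condRisk bstar t := by
  have habs : 0 ≤ |t - s| := abs_nonneg _
  cases b <;> cases bstar <;> simp only [condRisk, Bool.false_eq_true, reduceIte,
    false_iff, true_iff, not_le] at hb hbstar ⊢
  · linarith
  · linarith [le_abs_self (t - s)]
  · linarith [neg_abs_le (t - s)]
  · linarith

lemma ofReal_condRisk_toReal {t : ℝ≥0∞} (ht : t ≤ 1) (b : Bool) :
    ENNReal.ofReal (condRisk b t.toReal) = if b then 1 - t else t := by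
  have ht' : t ≠ ⊤ := ne_top_of_le_ne_top ENNReal.one_ne_top ht
  cases b
  · simp [condRisk, ht']
  · simp [condRisk, ENNReal.ofReal_sub, ht']

lemma measurableSet_threshold {Ω : Type*} [MeasurableSpace Ω] {g : Ω → Bool} {h : Ω → ℝ}
    (hh : Measurable h) (hg : ∀ x, g x = true ↔ 1/2 ≤ h x) :
    MeasurableSet {x | g x = true} := by
  simp only [hg]
  exact measurableSet_le measurable_const hh

namespace MeasureTheory

variable {Ω : Type*} [MeasurableSpace Ω] {μ : Measure (Ω × Bool)} {ν : Measure Ω} {S : Set Ω}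

lemma fst_apply_eq_prod_true_add_prod_false (hS : MeasurableSet S) :
    μ.fst S = μ (S ×ˢ {true}) + μ (S ×ˢ {false}) := by
  rw [Measure.fst_apply hS, ← measure_union _ (hS.prod (measurableSet_singleton false))]
  · congr 1
    ext ⟨x, b⟩
    cases b <;> simp
  · exact Set.disjoint_prod.2 (Or.inr (by simp))

section PositiveLabel

variable (hν : ∀ A : Set Ω, MeasurableSet A → ν A = μ (A ×ˢ ({true} : Set Bool)))
include hν

lemma le_fst_of_apply_eq_prod_true : ν ≤ μ.fst :=
  Measure.le_iff.2 fun S hS => by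
    rw [hν S hS, fst_apply_eq_prod_true_add_prod_false hS]
    exact le_self_add

variable [IsFiniteMeasure μ]

lemma prod_true_eq_setLIntegral_rnDeriv (hS : MeasurableSet S) :
    μ (S ×ˢ {true}) = ∫⁻ x in S, ν.rnDeriv μ.fst x ∂μ.fst := by
  have hle := le_fst_of_apply_eq_prod_true hν
  have : IsFiniteMeasure ν := isFiniteMeasure_of_le _ hle
  rw [← hν S hS, Measure.setLIntegral_rnDeriv' (Measure.absolutelyContinuous_of_le hle) hS]

lemma prod_false_eq_setLIntegral_one_sub_rnDeriv (hS : MeasurableSet S) :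
    μ (S ×ˢ {false}) = ∫⁻ x in S, (1 - ν.rnDeriv μ.fst x) ∂μ.fst := by
  have hle := le_fst_of_apply_eq_prod_true hν
  rw [lintegral_sub (Measure.measurable_rnDeriv _ _), setLIntegral_one,
    ← prod_true_eq_setLIntegral_rnDeriv hν hS, fst_apply_eq_prod_true_add_prod_false hS,
    ENNReal.add_sub_cancel_left (measure_ne_top _ _)]
  · rw [← prod_true_eq_setLIntegral_rnDeriv hν hS]
    exact measure_ne_top _ _
  · exact ae_restrict_of_ae (Measure.rnDeriv_le_one_of_le hle)

lemma measure_misclassified_eq_lintegral_condRisk {g : Ω → Bool}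
    (hg : MeasurableSet {x | g x = true}) :
    μ {p : Ω × Bool | g p.1 ≠ p.2}
      = ∫⁻ x, ENNReal.ofReal (condRisk (g x) (ν.rnDeriv μ.fst x).toReal) ∂μ.fst := by
  classical
  have hsplit : {p : Ω × Bool | g p.1 ≠ p.2}
      = {x | g x = true} ×ˢ {false} ∪ {x | g x = true}ᶜ ×ˢ {true} := by
    ext ⟨x, b⟩
    cases hx : g x <;> cases b <;> simp [hx]
  have hdisj : Disjoint ({x | g x = true} ×ˢ ({false} : Set Bool))
      ({x | g x = true}ᶜ ×ˢ {true}) :=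
    Set.disjoint_prod.2 (Or.inl disjoint_compl_right)
  rw [hsplit, measure_union hdisj (hg.compl.prod (measurableSet_singleton true)),
    prod_false_eq_setLIntegral_one_sub_rnDeriv hν hg,
    prod_true_eq_setLIntegral_rnDeriv hν hg.compl, ← lintegral_piecewise hg]
  refine lintegral_congr_ae ?_
  filter_upwards [Measure.rnDeriv_le_one_of_le (le_fst_of_apply_eq_prod_true hν)] with x hx
  rw [ofReal_condRisk_toReal hx]
  by_cases hgx : g x = true <;> simp [Set.piecewise, hgx]

end PositiveLabel

end MeasureTheory

/-- The excess misclassification error of a plug-in classifier `gₙ` built from an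
estimate `ηₙ` of the regression function `η` is at most `2 ∫ |η - ηₙ| dλ`. -/
theorem plugin_classifier_L1_bound
    {Ω : Type*} [MeasurableSpace Ω]
    (μ : Measure (Ω × Bool)) [IsProbabilityMeasure μ]
    (lam : Measure Ω) (hlam : lam = μ.map Prod.fst)
    (ν : Measure Ω)
    (hν : ∀ A : Set Ω, MeasurableSet A → ν A = μ (A ×ˢ ({true} : Set Bool)))
    (η : Ω → ℝ) (hη : ∀ x, η x = (ν.rnDeriv lam x).toReal)
    (gstar : Ω → Bool) (hgstar : ∀ x, gstar x = true ↔ (1/2 : ℝ) ≤ η x)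
    (ηn : Ω → ℝ) (hηn : Measurable ηn)
    (gn : Ω → Bool) (hgn : ∀ x, gn x = true ↔ (1/2 : ℝ) ≤ ηn x) :
    μ {p : Ω × Bool | gn p.1 ≠ p.2} - μ {p : Ω × Bool | gstar p.1 ≠ p.2}
      ≤ 2 * ∫⁻ x, ENNReal.ofReal |η x - ηn x| ∂lam := by
  obtain rfl : lam = μ.fst := hlam
  have hηm : Measurable η := funext hη ▸ (Measure.measurable_rnDeriv _ _).ennreal_toReal
  have hdist : Measurable fun x => ENNReal.ofReal |η x - ηn x| :=
    (hηm.sub hηn).abs.ennreal_ofReal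
  rw [measure_misclassified_eq_lintegral_condRisk hν (measurableSet_threshold hηn hgn),
    measure_misclassified_eq_lintegral_condRisk hν (measurableSet_threshold hηm hgstar),
    tsub_le_iff_right, ← lintegral_const_mul _ hdist, ← lintegral_add_left (hdist.const_mul 2)]
  simp only [← hη]
  refine lintegral_mono fun x => ?_
  calc ENNReal.ofReal (condRisk (gn x) (η x))
      ≤ ENNReal.ofReal (2 * |η x - ηn x| + condRisk (gstar x) (η x)) :=
        ENNReal.ofReal_le_ofReal (condRisk_le_of_threshold (hgn x) (hgstar x))
    _ ≤ 2 * ENNReal.ofReal |η x - ηn x| + ENNReal.ofReal (condRisk (gstar x) (η x)) := by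
        rw [← ENNReal.ofReal_ofNat 2, ← ENNReal.ofReal_mul zero_le_two]
        exact ENNReal.ofReal_add_le
end

section
/- Let Υ be a set equipped with a σ-algebra, let C ≥ 1, and let ρ : Υ → Υ → ℝ be a separable C-inframetric on Υ that is jointly measurable (as a function on Υ × Υ with the product σ-algebra). Let X₀, X₁, X₂, … be an i.i.d. sequence of Υ-valued random variables on a probability space (Ω, P), regard X₀ as the query, and let (kₙ) be a sequence of positive integers with kₙ/n → 0 as n → ∞. Then for every a > 0, P( card{i ∈ {1,…,n} : ρ(Xᵢ, X₀) < a} < kₙ ) → 0 as n → ∞. (Equivalently, the probability that the kₙ-th nearest sample point to X₀ in the ρ-distance lies at ρ-distance at least a from X₀ tends to zero.) -/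
/-!
Condition on the query: by independence, the probability equals the average over `x ~ X₀` of
`P(#{i ≤ n | ρ(Xᵢ, x) < a} < kₙ)`. If the ball of radius `a` about `x` has mass `p > 0`, the
strong law of large numbers makes the count `≈ p n`, which eventually exceeds `kₙ = o(n)`, so
these probabilities tend to `0`. Separability and the relaxed triangle inequality give
positive mass to almost every such ball, and dominated convergence concludes.
-/

open MeasureTheory ProbabilityTheory Filter Finset
open scoped Topology

section Inframetric

variable {Υ : Type*} {C : ℝ} {ρ : Υ → Υ → ℝ}

lemma setOf_lt_div_subset_setOf_lt (hC : 0 < C) (hsymm : ∀ x y, ρ x y = ρ y x)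
    (hinfra : ∀ x y z, ρ x z ≤ C * max (ρ x y) (ρ y z)) {r : ℝ} {x t : Υ} (hxt : ρ x t < r / C) :
    {y | ρ y t < r / C} ⊆ {y | ρ y x < r} := by
  intro y hyt
  calc ρ y x ≤ C * max (ρ y t) (ρ t x) := hinfra y t x
    _ < C * (r / C) := by gcongr; exact max_lt hyt (hsymm t x ▸ hxt)
    _ = r := mul_div_cancel₀ r hC.ne'

/-- The null balls of radius `r / C` about the points of a countable dense set cover every `x`
whose ball of radius `r` is null. -/
lemma ae_measure_setOf_lt_pos [MeasurableSpace Υ] (μ : Measure Υ) (hC : 0 < C)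
    (hsymm : ∀ x y, ρ x y = ρ y x) (hinfra : ∀ x y z, ρ x z ≤ C * max (ρ x y) (ρ y z))
    (hsep : ∃ T : Set Υ, T.Countable ∧ ∀ x : Υ, ∀ ε > 0, ∃ t ∈ T, ρ x t < ε)
    {r : ℝ} (hr : 0 < r) :
    ∀ᵐ x ∂μ, 0 < μ {y | ρ y x < r} := by
  obtain ⟨T, hT, hdense⟩ := hsep
  let T₀ := {t ∈ T | μ {y | ρ y t < r / C} = 0}
  have hcover : {x | ¬ 0 < μ {y | ρ y x < r}} ⊆ ⋃ t ∈ T₀, {y | ρ y t < r / C} := by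
    intro x hx
    obtain ⟨t, htT, hxt⟩ := hdense x (r / C) (div_pos hr hC)
    have hnull : μ {y | ρ y t < r / C} = 0 :=
      measure_mono_null (setOf_lt_div_subset_setOf_lt hC hsymm hinfra hxt) (by simpa using hx)
    exact Set.mem_biUnion ⟨htT, hnull⟩ hxt
  rw [ae_iff]
  refine measure_mono_null hcover ?_
  rw [measure_biUnion_null_iff (hT.mono fun _ ht => ht.1)]
  exact fun _ ht => ht.2

end Inframetric

lemma Finset.card_filter_Icc_one_eq_card_filter_range (n : ℕ) (p : ℕ → Prop) [DecidablePred p] :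
    #{i ∈ Icc 1 n | p i} = #{i ∈ range n | p (i + 1)} := by
  refine card_nbij' (· - 1) (· + 1) ?_ ?_ ?_ ?_ <;> intro i hi <;> grind

lemma tendsto_measure_of_ae_eventually_notMem {Ω ι : Type*} [MeasurableSpace Ω] {P : Measure Ω}
    [IsFiniteMeasure P] {L : Filter ι} [L.IsCountablyGenerated] {A : ι → Set Ω}
    (hA : ∀ i, MeasurableSet (A i)) (h : ∀ᵐ ω ∂P, ∀ᶠ i in L, ω ∉ A i) :
    Tendsto (fun i => P (A i)) L (𝓝 0) := by
  simpa using tendsto_measure_of_ae_tendsto_indicator_of_isFiniteMeasure L MeasurableSet.empty hA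
    (by simpa using h)

section Counting

variable {Ω α : Type*} [MeasurableSpace Ω] [MeasurableSpace α] {P : Measure Ω}

lemma measurable_card_filter {ι : Type*} (s : Finset ι) {p : ι → Ω → Prop}
    [∀ i ω, Decidable (p i ω)] (hp : ∀ i, MeasurableSet {ω | p i ω}) :
    Measurable fun ω => #{i ∈ s | p i ω} := by
  simp_rw [card_filter]
  exact Finset.measurable_sum _ fun i _ => measurable_const.ite (hp i) measurable_const

lemma ae_tendsto_card_filter_div [IsFiniteMeasure P] {Y : ℕ → Ω → α}
    (hindep : Pairwise fun i j => IndepFun (Y i) (Y j) P)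
    (hident : ∀ i, IdentDistrib (Y i) (Y 0) P P) {p : α → Prop} [DecidablePred p]
    (hp : MeasurableSet {y | p y}) (hY : Measurable (Y 0)) :
    ∀ᵐ ω ∂P, Tendsto (fun n : ℕ => (#{i ∈ range n | p (Y i ω)} : ℝ) / n) atTop
      (𝓝 (P.real (Y 0 ⁻¹' {y | p y}))) := by
  let f : α → ℝ := Set.indicator {y | p y} 1
  have hf : Measurable f := measurable_const.indicator hp
  have hsum : ∀ n ω, ∑ i ∈ range n, f (Y i ω) = #{i ∈ range n | p (Y i ω)} := by
    intro n ω
    simp [f, Set.indicator_apply, sum_boole]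
  have hcomp : f ∘ Y 0 = (Y 0 ⁻¹' {y | p y}).indicator 1 := by
    ext ω
    simp [f, Set.indicator_apply]
  have hint : Integrable (f ∘ Y 0) P := hcomp ▸ (integrable_const 1).indicator (hY hp)
  have hmean : ∫ ω, f (Y 0 ω) ∂P = P.real (Y 0 ⁻¹' {y | p y}) :=
    (congrArg (∫ ω, · ω ∂P) hcomp).trans (integral_indicator_one (hY hp))
  filter_upwards [strong_law_ae (fun i => f ∘ Y i) hint
    (fun i j hij => (hindep hij).comp hf hf) (fun i => (hident i).comp hf)] with ω hω
  simpa [hsum, hmean, div_eq_inv_mul] using hω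

lemma ae_eventually_le_card_filter [IsFiniteMeasure P] {Y : ℕ → Ω → α}
    (hindep : Pairwise fun i j => IndepFun (Y i) (Y j) P)
    (hident : ∀ i, IdentDistrib (Y i) (Y 0) P P) {p : α → Prop} [DecidablePred p]
    (hp : MeasurableSet {y | p y}) (hY : Measurable (Y 0)) (hpos : 0 < P (Y 0 ⁻¹' {y | p y}))
    {k : ℕ → ℕ} (hk : Tendsto (fun n => (k n : ℝ) / n) atTop (𝓝 0)) :
    ∀ᵐ ω ∂P, ∀ᶠ n in atTop, k n ≤ #{i ∈ range n | p (Y i ω)} := by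
  filter_upwards [ae_tendsto_card_filter_div hindep hident hp hY] with ω hω
  filter_upwards [hk.eventually_lt hω (ENNReal.toReal_pos hpos.ne' (measure_ne_top _ _))]
    with n hn
  rw [div_eq_mul_inv, div_eq_mul_inv] at hn
  exact_mod_cast (lt_of_mul_lt_mul_right hn (by positivity)).le

lemma tendsto_measure_card_filter_lt [IsFiniteMeasure P] {Y : ℕ → Ω → α}
    (hY : ∀ i, Measurable (Y i)) (hindep : Pairwise fun i j => IndepFun (Y i) (Y j) P)
    (hident : ∀ i, IdentDistrib (Y i) (Y 0) P P) {p : α → Prop} [DecidablePred p]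
    (hp : MeasurableSet {y | p y}) (hpos : 0 < P (Y 0 ⁻¹' {y | p y}))
    {k : ℕ → ℕ} (hk : Tendsto (fun n => (k n : ℝ) / n) atTop (𝓝 0)) :
    Tendsto (fun n => P {ω | #{i ∈ range n | p (Y i ω)} < k n}) atTop (𝓝 0) := by
  refine tendsto_measure_of_ae_eventually_notMem
    (fun n => measurableSet_lt (measurable_card_filter _ fun i => hY i hp) measurable_const) ?_
  filter_upwards [ae_eventually_le_card_filter hindep hident hp (hY 0) hpos hk] with ω hω
  filter_upwards [hω] with n hn using not_lt.2 hn

lemma tendsto_measure_card_filter_Icc_lt [IsFiniteMeasure P] {X : ℕ → Ω → α}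
    (hX : ∀ i, Measurable (X i)) (hident : ∀ i, P.map (X i) = P.map (X 0))
    (hindep : iIndepFun X P) {p : α → Prop} [DecidablePred p]
    (hp : MeasurableSet {y | p y}) (hpos : 0 < P.map (X 0) {y | p y})
    {k : ℕ → ℕ} (hk : Tendsto (fun n => (k n : ℝ) / n) atTop (𝓝 0)) :
    Tendsto (fun n => P {ω | #{i ∈ Icc 1 n | p (X i ω)} < k n}) atTop (𝓝 0) := by
  simp_rw [card_filter_Icc_one_eq_card_filter_range]
  refine tendsto_measure_card_filter_lt (Y := fun i => X (i + 1)) (fun i => hX _)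
    (fun i j hij => hindep.indepFun (by simpa using hij))
    (fun i => ⟨(hX _).aemeasurable, (hX _).aemeasurable, by rw [hident (i + 1), hident (0 + 1)]⟩)
    hp ?_ hk
  rwa [← hident 1, Measure.map_apply (hX 1) hp] at hpos

end Counting

section Conditioning

variable {Ω α ι : Type*} {r : α → α → Prop} [∀ x y, Decidable (r x y)]

lemma preimage_setOf_card_filter_lt (Z : Ω → α) (X : ι → Ω → α) (s : Finset ι) (m : ℕ) :
    (fun ω => (Z ω, fun i : s => X i ω)) ⁻¹' {q : α × (s → α) | #{i | r (q.2 i) q.1} < m} =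
      {ω | #{i ∈ s | r (X i ω) (Z ω)} < m} := by
  ext ω
  simp only [Set.mem_preimage, Set.mem_ofPred_eq]
  rw [card_filter, card_filter, ← sum_coe_sort s]

variable [MeasurableSpace Ω] [MeasurableSpace α] {P : Measure Ω} [IsFiniteMeasure P]

lemma ProbabilityTheory.IndepFun.measure_preimage_prodMk_eq_lintegral {β : Type*}
    [MeasurableSpace β] {f : Ω → α} {g : Ω → β} (hfg : IndepFun f g P)
    (hf : Measurable f) (hg : Measurable g) {S : Set (α × β)} (hS : MeasurableSet S) :
    P ((fun ω => (f ω, g ω)) ⁻¹' S) = ∫⁻ x, P (g ⁻¹' (Prod.mk x ⁻¹' S)) ∂(P.map f) := by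
  rw [← Measure.map_apply (hf.prodMk hg) hS,
    (indepFun_iff_map_prod_eq_prod_map_map hf.aemeasurable hg.aemeasurable).1 hfg,
    Measure.prod_apply hS]
  simp_rw [Measure.map_apply hg (measurable_prodMk_left hS)]

lemma measurableSet_setOf_card_filter_lt (s : Finset ι)
    (hr : MeasurableSet {q : α × α | r q.1 q.2}) (m : ℕ) :
    MeasurableSet {q : α × (s → α) | #{i | r (q.2 i) q.1} < m} :=
  measurableSet_lt (measurable_card_filter _ fun i =>
    hr.preimage (by fun_prop : Measurable fun q : α × (s → α) => (q.2 i, q.1)))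
    measurable_const

lemma measurable_measure_setOf_card_filter_lt {X : ι → Ω → α} (hX : ∀ i, Measurable (X i))
    (s : Finset ι) (hr : MeasurableSet {q : α × α | r q.1 q.2}) (m : ℕ) :
    Measurable fun x => P {ω | #{i ∈ s | r (X i ω) x} < m} := by
  have hS := measurableSet_setOf_card_filter_lt s hr m
  convert measurable_measure_prodMk_left (ν := P.map fun ω (i : s) => X i ω) hS using 1
  funext x
  rw [Measure.map_apply (measurable_pi_lambda (fun ω (i : s) => X i ω) fun i => hX i)
    (measurable_prodMk_left hS)]
  exact congrArg P (preimage_setOf_card_filter_lt (fun _ => x) X s m).symm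

lemma measure_setOf_card_filter_lt_eq_lintegral {X : ι → Ω → α} (hX : ∀ i, Measurable (X i))
    (hindep : iIndepFun X P) {s : Finset ι} {j : ι} (hj : j ∉ s)
    (hr : MeasurableSet {q : α × α | r q.1 q.2}) (m : ℕ) :
    P {ω | #{i ∈ s | r (X i ω) (X j ω)} < m} =
      ∫⁻ x, P {ω | #{i ∈ s | r (X i ω) x} < m} ∂(P.map (X j)) := by
  have hjs : IndepFun (X j) (fun ω (i : s) => X i ω) P :=
    (hindep.indepFun_finset {j} s (disjoint_singleton_left.2 hj) hX).comp
      (measurable_pi_apply (⟨j, mem_singleton_self j⟩ : ({j} : Finset ι))) measurable_id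
  rw [← preimage_setOf_card_filter_lt, hjs.measure_preimage_prodMk_eq_lintegral (hX j)
    (measurable_pi_lambda (fun ω (i : s) => X i ω) fun i => hX i)
    (measurableSet_setOf_card_filter_lt s hr m)]
  exact lintegral_congr fun x => congrArg P (preimage_setOf_card_filter_lt (fun _ => x) X s m)

end Conditioning

open Classical in
theorem knn_distance_tendsto_zero_general
    {Υ : Type*} [MeasurableSpace Υ]
    (C : ℝ) (hC : 1 ≤ C)
    (ρ : Υ → Υ → ℝ)
    (hsymm : ∀ x y, ρ x y = ρ y x)
    (hinfra : ∀ x y z, ρ x z ≤ C * max (ρ x y) (ρ y z))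
    (hsep : ∃ T : Set Υ, T.Countable ∧ ∀ x : Υ, ∀ ε > 0, ∃ t ∈ T, ρ x t < ε)
    (hρmeas : Measurable (fun p : Υ × Υ => ρ p.1 p.2))
    {Ω : Type*} [MeasurableSpace Ω] (P : Measure Ω) [IsProbabilityMeasure P]
    (X : ℕ → Ω → Υ)
    (hXmeas : ∀ i, Measurable (X i))
    (hident : ∀ i, Measure.map (X i) P = Measure.map (X 0) P)
    (hindep : iIndepFun X P)
    (k : ℕ → ℕ)
    (hkn : Tendsto (fun n => (k n : ℝ) / (n : ℝ)) atTop (nhds 0))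
    (a : ℝ) (ha : 0 < a) :
    Tendsto (fun n => P {ω : Ω |
        ((Finset.Icc 1 n).filter (fun i => ρ (X i ω) (X 0 ω) < a)).card < k n})
      atTop (nhds 0) := by
  have hR : MeasurableSet {q : Υ × Υ | ρ q.1 q.2 < a} := measurableSet_lt hρmeas measurable_const
  have hcond : ∀ n, P {ω | #{i ∈ Icc 1 n | ρ (X i ω) (X 0 ω) < a} < k n} =
      ∫⁻ x, P {ω | #{i ∈ Icc 1 n | ρ (X i ω) x < a} < k n} ∂(P.map (X 0)) := fun n =>
    measure_setOf_card_filter_lt_eq_lintegral (r := fun y x => ρ y x < a) hXmeas hindep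
      (by simp) hR (k n)
  simp_rw [hcond]
  rw [← lintegral_zero (μ := P.map (X 0))]
  refine tendsto_lintegral_of_dominated_convergence 1
    (fun n => measurable_measure_setOf_card_filter_lt (r := fun y x => ρ y x < a) hXmeas _ hR _)
    (fun n => ae_of_all _ fun x => prob_le_one) (by simp) ?_
  filter_upwards [ae_measure_setOf_lt_pos _ (zero_lt_one.trans_le hC) hsymm hinfra hsep ha]
    with x hx
  exact tendsto_measure_card_filter_Icc_lt hXmeas hident hindep
    (hR.preimage (measurable_id.prodMk measurable_const)) hx hkn

open Classical in
/-- For an i.i.d. sample in a separable inframetric space, if `kₙ/n → 0` then the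
probability that fewer than `kₙ` sample points lie within `ρ`-distance `a` of the
query `X₀` tends to zero: the `kₙ`-th nearest neighbour eventually lies within any
fixed distance `a` of the query. -/
theorem knn_distance_tendsto_zero
    {Υ : Type*} [MeasurableSpace Υ]
    (C : ℝ) (hC : 1 ≤ C)
    (ρ : Υ → Υ → ℝ)
    (hnonneg : ∀ x y, 0 ≤ ρ x y)
    (heq : ∀ x y, ρ x y = 0 ↔ x = y)
    (hsymm : ∀ x y, ρ x y = ρ y x)
    (hinfra : ∀ x y z, ρ x z ≤ C * max (ρ x y) (ρ y z))
    (hsep : ∃ T : Set Υ, T.Countable ∧ ∀ x : Υ, ∀ ε > 0, ∃ t ∈ T, ρ x t < ε)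
    (hρmeas : Measurable (fun p : Υ × Υ => ρ p.1 p.2))
    {Ω : Type*} [MeasurableSpace Ω] (P : Measure Ω) [IsProbabilityMeasure P]
    (X : ℕ → Ω → Υ)
    (hXmeas : ∀ i, Measurable (X i))
    (hident : ∀ i, Measure.map (X i) P = Measure.map (X 0) P)
    (hindep : iIndepFun X P)
    (k : ℕ → ℕ) (hkpos : ∀ n, 0 < k n)
    (hkn : Tendsto (fun n => (k n : ℝ) / (n : ℝ)) atTop (nhds 0))
    (a : ℝ) (ha : 0 < a) :
    Tendsto (fun n => P {ω : Ω |
        ((Finset.Icc 1 n).filter (fun i => ρ (X i ω) (X 0 ω) < a)).card < k n})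
      atTop (nhds 0) :=
  knn_distance_tendsto_zero_general C hC ρ hsymm hinfra hsep hρmeas P X hXmeas hident hindep k hkn a
    ha
end

section
/- Let E be a real normed vector space, let c be a positive integer, and let x₁, …, x_c ∈ E be points such that the unit sphere {v ∈ E : ‖v‖ = 1} is covered by the open balls of radius 1/4 centred at x₁, …, x_c. Then there exist c subsets S₁, …, S_c of E whose union is all of E, each containing the zero vector, such that for every q ∈ {1,…,c} and all x, y ∈ S_q with x ≠ 0 and ‖x‖ ≤ ‖y‖, one has ‖y − x‖ < ‖y‖. -/
/-!
Put a nonzero vector into the `i`-th set when its direction `v / ‖v‖` lies within `1/4` of `x i`.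
Two nonzero vectors `u`, `v` of the same set then have directions at distance `< 1/2`, and
`v - u = ‖u‖ • (v̂ - û) + (‖v‖ - ‖u‖) • v̂` gives `‖v - u‖ < ‖u‖ / 2 + (‖v‖ - ‖u‖) < ‖v‖`
as soon as `‖u‖ ≤ ‖v‖`.
-/

open NormedSpace

section

variable {E : Type*} [NormedAddCommGroup E] [NormedSpace ℝ E]

theorem norm_normalize_le_one (v : E) : ‖normalize v‖ ≤ 1 := by
  rcases eq_or_ne v 0 with rfl | hv
  · simp [normalize_zero_eq_zero]
  · exact (norm_normalize hv).le

theorem norm_sub_le_mul_norm_normalize_sub_add {u v : E} (huv : ‖u‖ ≤ ‖v‖) :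
    ‖v - u‖ ≤ ‖u‖ * ‖normalize v - normalize u‖ + (‖v‖ - ‖u‖) := by
  have hdecomp : v - u = ‖u‖ • (normalize v - normalize u) + (‖v‖ - ‖u‖) • normalize v := by
    rw [smul_sub, sub_smul, norm_smul_normalize, norm_smul_normalize]
    abel
  calc ‖v - u‖
      ≤ ‖‖u‖ • (normalize v - normalize u)‖ + ‖(‖v‖ - ‖u‖) • normalize v‖ :=
        hdecomp ▸ norm_add_le _ _
    _ ≤ ‖u‖ * ‖normalize v - normalize u‖ + (‖v‖ - ‖u‖) := by
        rw [norm_smul, norm_smul, norm_norm, Real.norm_of_nonneg (sub_nonneg.2 huv)]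
        gcongr
        exact mul_le_of_le_one_right (sub_nonneg.2 huv) (norm_normalize_le_one v)

theorem norm_sub_lt_norm_of_norm_normalize_sub_lt_one {u v : E} (hu : u ≠ 0)
    (huv : ‖u‖ ≤ ‖v‖) (hdir : ‖normalize v - normalize u‖ < 1) : ‖v - u‖ < ‖v‖ :=
  calc ‖v - u‖ ≤ ‖u‖ * ‖normalize v - normalize u‖ + (‖v‖ - ‖u‖) :=
        norm_sub_le_mul_norm_normalize_sub_add huv
    _ < ‖u‖ * 1 + (‖v‖ - ‖u‖) := by gcongr
    _ = ‖v‖ := by ring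

def directionCone (p : E) (r : ℝ) : Set E :=
  insert 0 {v | ‖normalize v - p‖ < r}

theorem iUnion_directionCone_eq_univ {ι : Type*} [Nonempty ι] {p : ι → E} {r : ℝ}
    (hcover : ∀ v : E, ‖v‖ = 1 → ∃ i, ‖v - p i‖ < r) :
    ⋃ i, directionCone (p i) r = Set.univ := by
  refine Set.eq_univ_of_forall fun v => ?_
  rcases eq_or_ne v 0 with rfl | hv
  · exact Set.mem_iUnion.2 ⟨Classical.arbitrary ι, Set.mem_insert _ _⟩
  · obtain ⟨i, hi⟩ := hcover _ (norm_normalize_eq_one_iff.2 hv)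
    exact Set.mem_iUnion.2 ⟨i, Set.mem_insert_of_mem _ hi⟩

theorem norm_sub_lt_norm_of_mem_directionCone {p u v : E} {r : ℝ} (hr : r ≤ 1 / 2)
    (hu : u ∈ directionCone p r) (hv : v ∈ directionCone p r) (hu0 : u ≠ 0)
    (huv : ‖u‖ ≤ ‖v‖) : ‖v - u‖ < ‖v‖ := by
  have hv0 : v ≠ 0 := norm_pos_iff.1 ((norm_pos_iff.2 hu0).trans_le huv)
  have hu' : ‖normalize u - p‖ < r := hu.resolve_left hu0
  have hv' : ‖normalize v - p‖ < r := hv.resolve_left hv0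
  refine norm_sub_lt_norm_of_norm_normalize_sub_lt_one hu0 huv ?_
  calc ‖normalize v - normalize u‖ ≤ ‖normalize v - p‖ + ‖normalize u - p‖ :=
        norm_sub_le_norm_sub_add_norm_sub _ _ _ |>.trans_eq (by rw [norm_sub_rev p])
    _ < 1 := by linarith

end

/-- Generalized cone covering (from a `1/4`-ball covering of the unit sphere):
there exist `c` subsets of `E` covering `E`, each containing `0`, such that within
each subset, if `x ≠ 0` and `‖x‖ ≤ ‖y‖` then `‖y - x‖ < ‖y‖`. -/
theorem cone_covering_from_sphere_covering
    {E : Type*} [NormedAddCommGroup E] [NormedSpace ℝ E]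
    (c : ℕ) (hc : 0 < c) (x : Fin c → E)
    (hcover : ∀ v : E, ‖v‖ = 1 → ∃ i, ‖v - x i‖ < 1/4) :
    ∃ S : Fin c → Set E, (⋃ i, S i) = Set.univ ∧ (∀ i, (0 : E) ∈ S i) ∧
      ∀ i, ∀ u ∈ S i, ∀ v ∈ S i, u ≠ 0 → ‖u‖ ≤ ‖v‖ → ‖v - u‖ < ‖v‖ := by
  have : Nonempty (Fin c) := ⟨⟨0, hc⟩⟩
  exact ⟨fun i => directionCone (x i) (1 / 4), iUnion_directionCone_eq_univ hcover,
    fun _ => Set.mem_insert _ _,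
    fun _ _ hu _ hv hu0 huv => norm_sub_lt_norm_of_mem_directionCone (by norm_num) hu hv hu0 huv⟩
end

section
/- Let E be a real normed vector space and let S₁, …, S_c be subsets of E whose union is E, each containing 0, such that for every q and all u, v ∈ S_q with u ≠ 0 and ‖u‖ ≤ ‖v‖, one has ‖v − u‖ < ‖v‖. Let x, x₁, …, xₙ ∈ E be points that are pairwise distinct and such that all pairwise distances between distinct points of {x, x₁, …, xₙ} are distinct real numbers. Then for every positive integer k, the number of indices i ∈ {1,…,n} such that card{ j ∈ {1,…,n}, j ≠ i : ‖xⱼ − xᵢ‖ < ‖x − xᵢ‖ } < k (i.e. the number of sample points xᵢ that have x among their k nearest neighbours when x replaces xᵢ in the sample) is at most c·k. -/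
open Classical in
lemma rank_filter_card_le {α : Type*} [DecidableEq α] (s : Finset α) (f : α → ℝ)
    (hf : ∀ a ∈ s, ∀ b ∈ s, f a = f b → a = b) (k : ℕ) :
    (s.filter (fun t => (s.filter (fun u => u ≠ t ∧ f u < f t)).card < k)).card ≤ k := by
  by_contra h
  push_neg at h
  set b := s.filter (fun t => (s.filter (fun u => u ≠ t ∧ f u < f t)).card < k) with hb
  have hne : b.Nonempty := Finset.card_pos.mp (lt_of_le_of_lt (Nat.zero_le k) h)
  obtain ⟨t, ht, hmax⟩ := b.exists_max_image f hne
  have hts : t ∈ s := (Finset.mem_filter.mp ht).1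
  have hsub : b.erase t ⊆ s.filter (fun u => u ≠ t ∧ f u < f t) := by
    intro u hu
    obtain ⟨hut, hub⟩ := Finset.mem_erase.mp hu
    have hus : u ∈ s := (Finset.mem_filter.mp hub).1
    refine Finset.mem_filter.mpr ⟨hus, hut, ?_⟩
    exact lt_of_le_of_ne (hmax u hub) (fun he => hut (hf u hus t hts he))
  have hle := Finset.card_le_card hsub
  have h2 := (Finset.mem_filter.mp ht).2
  have h3 : (b.erase t).card = b.card - 1 := Finset.card_erase_of_mem ht
  omega

open Classical in
/-- Combinatorial core of Stone's geometric lemma: given a cone covering of `E`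
with the contraction property, and sample points with all pairwise distances
distinct (no ties), the query `x` can be among the `k` nearest neighbours of at
most `c·k` of the sample points. -/
theorem stones_lemma_combinatorial_core
    {E : Type*} [NormedAddCommGroup E] [NormedSpace ℝ E]
    {c n : ℕ} (S : Fin c → Set E)
    (hcover : (⋃ i, S i) = Set.univ)
    (h0 : ∀ i, (0 : E) ∈ S i)
    (hcone : ∀ i, ∀ u ∈ S i, ∀ v ∈ S i, u ≠ 0 → ‖u‖ ≤ ‖v‖ → ‖v - u‖ < ‖v‖)
    (x : E) (q : Fin n → E)
    (hinj : Function.Injective q) (hqx : ∀ i, q i ≠ x)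
    (hdist : ∀ a b a' b' : E, a ∈ insert x (Set.range q) → b ∈ insert x (Set.range q) →
      a' ∈ insert x (Set.range q) → b' ∈ insert x (Set.range q) →
      a ≠ b → a' ≠ b' → ‖a - b‖ = ‖a' - b'‖ → (a = a' ∧ b = b') ∨ (a = b' ∧ b = a'))
    (k : ℕ) (hk : 0 < k) :
    (Finset.univ.filter (fun i : Fin n =>
        (Finset.univ.filter (fun j : Fin n =>
          j ≠ i ∧ ‖q j - q i‖ < ‖x - q i‖)).card < k)).card ≤ c * k := by
  classical
  have hmem : ∀ i : Fin n, ∃ m, q i - x ∈ S m := by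
    intro i
    have : q i - x ∈ ⋃ m, S m := by rw [hcover]; trivial
    exact Set.mem_iUnion.mp this
  choose σ hσ using hmem
  have hfinj : ∀ a b : Fin n, ‖q a - x‖ = ‖q b - x‖ → a = b := by
    intro a b h
    have ha : q a ∈ insert x (Set.range q) := Set.mem_insert_iff.mpr (Or.inr ⟨a, rfl⟩)
    have hb : q b ∈ insert x (Set.range q) := Set.mem_insert_iff.mpr (Or.inr ⟨b, rfl⟩)
    rcases hdist (q a) x (q b) x ha (Set.mem_insert _ _) hb (Set.mem_insert _ _)
        (hqx a) (hqx b) h with ⟨h1, _⟩ | ⟨h1, _⟩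
    · exact hinj h1
    · exact absurd h1 (hqx a)
  set B := Finset.univ.filter (fun i : Fin n =>
        (Finset.univ.filter (fun j : Fin n =>
          j ≠ i ∧ ‖q j - q i‖ < ‖x - q i‖)).card < k) with hB
  have key : ∀ m : Fin c, (B.filter (fun i => σ i = m)).card ≤ k := by
    intro m
    have hsub : B.filter (fun i => σ i = m) ⊆
        ((Finset.univ.filter (fun i : Fin n => σ i = m)).filter
          (fun t => ((Finset.univ.filter (fun i : Fin n => σ i = m)).filter
            (fun u => u ≠ t ∧ ‖q u - x‖ < ‖q t - x‖)).card < k)) := by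
      intro i hi
      obtain ⟨hiB, him⟩ := Finset.mem_filter.mp hi
      obtain ⟨_, hik⟩ := Finset.mem_filter.mp hiB
      refine Finset.mem_filter.mpr ⟨Finset.mem_filter.mpr ⟨Finset.mem_univ _, him⟩, ?_⟩
      refine lt_of_le_of_lt (Finset.card_le_card ?_) hik
      intro u hu
      obtain ⟨hu1, hui, hult⟩ := Finset.mem_filter.mp hu
      have hum : σ u = m := (Finset.mem_filter.mp hu1).2
      refine Finset.mem_filter.mpr ⟨Finset.mem_univ _, hui, ?_⟩
      have hc := hcone m (q u - x) (hum ▸ hσ u) (q i - x) (him ▸ hσ i)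
        (sub_ne_zero.mpr (hqx u)) hult.le
      have he : q i - x - (q u - x) = q i - q u := by abel
      rw [he] at hc
      calc ‖q u - q i‖ = ‖q i - q u‖ := norm_sub_rev _ _
        _ < ‖q i - x‖ := hc
        _ = ‖x - q i‖ := norm_sub_rev _ _
    calc (B.filter (fun i => σ i = m)).card ≤ _ := Finset.card_le_card hsub
      _ ≤ k := rank_filter_card_le _ _ (fun a _ b _ h => hfinj a b h) k
  have hcard : B.card = ∑ m : Fin c, (B.filter (fun i => σ i = m)).card :=
    Finset.card_eq_sum_card_fiberwise (fun i _ => Finset.mem_univ (σ i))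
  calc B.card = _ := hcard
    _ ≤ ∑ _m : Fin c, k := Finset.sum_le_sum (fun m _ => key m)
    _ = c * k := by simp [Finset.sum_const, Finset.card_univ, mul_comm]
end

section
/- Let E be a finite-dimensional real vector space and let ‖·‖_L and ‖·‖_U be two norms on E. Then there exist a positive integer c and points x₁, …, x_c ∈ E such that for every function ρ : E → ℝ which is a norm (i.e. ρ(v) ≥ 0 with ρ(v) = 0 iff v = 0, ρ(t·v) = |t|·ρ(v) for all t ∈ ℝ, and ρ(u + v) ≤ ρ(u) + ρ(v)) and which satisfies ‖v‖_L ≤ ρ(v) ≤ ‖v‖_U for all v ∈ E, the unit sphere {v : ρ(v) = 1} is contained in the union over i = 1,…,c of the open ρ-balls {v : ρ(v − xᵢ) < 1/4}. -/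
/-!
Give `E` the norm `‖·‖_L`. In finite dimension the convex function `‖·‖_U` is continuous for it,
so the compact `‖·‖_L`-unit ball is covered by finitely many open `‖·‖_U`-balls of radius `1/4`.
Every `ρ`-unit vector lies in the `‖·‖_L`-unit ball because `‖·‖_L ≤ ρ`, and `ρ ≤ ‖·‖_U` puts each
`‖·‖_U`-ball inside the `ρ`-ball with the same centre.
-/

/-- `N` is a norm on the real vector space `E`. -/
def IsNorm {E : Type*} [AddCommGroup E] [Module ℝ E] (N : E → ℝ) : Prop :=
  (∀ v : E, 0 ≤ N v) ∧ (∀ v : E, N v = 0 ↔ v = 0) ∧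
  (∀ (t : ℝ) (v : E), N (t • v) = |t| * N v) ∧
  (∀ u v : E, N (u + v) ≤ N u + N v)

namespace IsNorm

variable {E : Type*} [AddCommGroup E] [Module ℝ E]

theorem normedSpaceCore [Norm E] (h : IsNorm (norm : E → ℝ)) : NormedSpace.Core ℝ E :=
  ⟨⟨h.1, h.2.2.1, h.2.2.2⟩, h.2.1⟩

def toSeminorm {N : E → ℝ} (h : IsNorm N) : Seminorm ℝ E :=
  Seminorm.of N h.2.2.2 h.2.2.1

end IsNorm

theorem Seminorm.continuous_of_finiteDimensional {E : Type*} [NormedAddCommGroup E]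
    [NormedSpace ℝ E] [FiniteDimensional ℝ E] (p : Seminorm ℝ E) : Continuous p :=
  continuousOn_univ.1 (p.convexOn.continuousOn isOpen_univ)

theorem IsCompact.exists_fin_cover_seminorm_balls {𝕜 E : Type*} [SeminormedRing 𝕜]
    [AddCommGroup E] [Module 𝕜 E] [TopologicalSpace E] [ContinuousSub E]
    {K : Set E} (hK : IsCompact K) (hne : K.Nonempty) {p : Seminorm 𝕜 E} (hp : Continuous p)
    {r : ℝ} (hr : 0 < r) :
    ∃ (c : ℕ) (x : Fin c → E), 0 < c ∧ K ⊆ ⋃ i, p.ball (x i) r := by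
  obtain ⟨t, ht⟩ := hK.elim_finite_subcover (fun y => p.ball y r)
    (fun y => isOpen_lt (hp.comp (continuous_id.sub continuous_const)) continuous_const)
    (fun v _ => Set.mem_iUnion.2 ⟨v, p.mem_ball_self hr⟩)
  refine ⟨t.card, fun i => t.equivFin.symm i, ?_, fun v hv => ?_⟩
  · obtain ⟨v, hv⟩ := hne
    obtain ⟨y, hy, -⟩ := Set.mem_iUnion₂.1 (ht hv)
    exact Finset.card_pos.2 ⟨y, hy⟩
  · obtain ⟨y, hy, hvy⟩ := Set.mem_iUnion₂.1 (ht hv)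
    exact Set.mem_iUnion.2 ⟨t.equivFin ⟨y, hy⟩, by simpa using hvy⟩

/-- For a family of norms sandwiched between two fixed norms on a finite-dimensional
real vector space, a single family of `c` centres suffices to cover each unit sphere
by `c` open balls of radius `1/4` (in the corresponding norm). -/
theorem uniform_quarter_ball_covering_of_bounded_norm_family
    {E : Type*} [AddCommGroup E] [Module ℝ E] [FiniteDimensional ℝ E]
    (NL NU : E → ℝ) (hNL : IsNorm NL) (hNU : IsNorm NU) :
    ∃ (c : ℕ) (x : Fin c → E), 0 < c ∧
      ∀ ρ : E → ℝ, IsNorm ρ → (∀ v : E, NL v ≤ ρ v ∧ ρ v ≤ NU v) →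
        ∀ v : E, ρ v = 1 → ∃ i, ρ (v - x i) < 1/4 := by
  let : Norm E := ⟨NL⟩
  have core : NormedSpace.Core ℝ E := hNL.normedSpaceCore
  let := NormedAddCommGroup.ofCore core
  let := NormedSpace.ofCore core
  obtain ⟨c, x, hc, hcover⟩ := (isCompact_closedBall (0 : E) 1).exists_fin_cover_seminorm_balls
    ⟨0, Metric.mem_closedBall_self zero_le_one⟩ hNU.toSeminorm.continuous_of_finiteDimensional
    (by norm_num : (0 : ℝ) < 1 / 4)
  refine ⟨c, x, hc, fun ρ _ hρ v hv => ?_⟩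
  have hv : v ∈ Metric.closedBall (0 : E) 1 := by
    rw [mem_closedBall_zero_iff]
    exact (hρ v).1.trans hv.le
  obtain ⟨i, hi⟩ := Set.mem_iUnion.1 (hcover hv)
  exact ⟨i, (hρ _).2.trans_lt hi⟩
end

section
/- Fix a positive integer n. For i ∈ {1,…,n}, let θᵢ = (i−1)π/(2n), let xᵢ = (cos θᵢ, sin θᵢ) ∈ ℝ², and define the norm ρᵢ : ℝ² → ℝ by ρᵢ(v₁, v₂) = √( (v₁ cos θᵢ + v₂ sin θᵢ)² + 4(−v₁ sin θᵢ + v₂ cos θᵢ)² ) (i.e. rotate by −θᵢ, multiply the second coordinate by 2, and take the Euclidean norm). Then for every i, ρᵢ(xᵢ) = 1, and for every j ≠ i with 1 ≤ j ≤ n, ρᵢ(xⱼ) > 1. Consequently, with the query at the origin, each sample point xᵢ is the unique nearest neighbour of the origin among x₁, …, xₙ with respect to its own norm ρᵢ. -/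
open Real

/-! In the frame rotated by `-θᵢ` the point `xⱼ` becomes `(cos (θⱼ - θᵢ), sin (θⱼ - θᵢ))`,
so `ρᵢ(xⱼ)² = 1 + 3 sin² (θⱼ - θᵢ)`. The angles are distinct and lie in `[0, π)`,
where `sin` of a nonzero difference never vanishes. -/

lemma rotate_dilate_sq_cos_sin (a b : ℝ) :
    (cos a * cos b + sin a * sin b) ^ 2 + 4 * (-cos a * sin b + sin a * cos b) ^ 2
      = 1 + 3 * sin (a - b) ^ 2 := by
  rw [← cos_sub, neg_mul, neg_add_eq_sub, ← sin_sub]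
  linear_combination sin_sq_add_cos_sq (a - b)

lemma sin_sub_ne_zero_of_mem_Ico {a b : ℝ} (ha : a ∈ Set.Ico 0 π) (hb : b ∈ Set.Ico 0 π)
    (hab : a ≠ b) : sin (a - b) ≠ 0 := fun h =>
  sub_ne_zero.mpr hab <|
    (sin_eq_zero_iff_of_lt_of_lt (by linarith [ha.1, hb.2]) (by linarith [ha.2, hb.1])).mp h

lemma natCast_mul_pi_div_mem_Ico {k n : ℕ} (hk : k < 2 * n) :
    (k : ℝ) * π / (2 * n) ∈ Set.Ico 0 π := by
  have hn : (0 : ℝ) < 2 * n := by exact_mod_cast hk.trans_le' k.zero_le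
  have hk' : (k : ℝ) < 2 * n := by exact_mod_cast hk
  refine ⟨by positivity, ?_⟩
  rw [div_lt_iff₀ hn]
  nlinarith [pi_pos]

lemma natCast_mul_pi_div_injective {n : ℕ} (hn : n ≠ 0) :
    Function.Injective fun k : ℕ => (k : ℝ) * π / (2 * n) := by
  have hn' : (2 * n : ℝ) ≠ 0 := by positivity
  intro k l h
  simpa [div_left_inj' hn', pi_ne_zero] using h

theorem each_point_nearest_in_own_norm_general
    (n : ℕ)
    (θ : Fin n → ℝ) (hθ : ∀ i, θ i = (i : ℕ) * π / (2 * n))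
    (x : Fin n → ℝ × ℝ) (hx : ∀ i, x i = (Real.cos (θ i), Real.sin (θ i)))
    (ρ : Fin n → ℝ × ℝ → ℝ)
    (hρ : ∀ i (v : ℝ × ℝ), ρ i v =
      Real.sqrt ((v.1 * Real.cos (θ i) + v.2 * Real.sin (θ i)) ^ 2
        + 4 * (-v.1 * Real.sin (θ i) + v.2 * Real.cos (θ i)) ^ 2)) :
    ∀ i, ρ i (x i) = 1 ∧ ∀ j, j ≠ i → 1 < ρ i (x j) := by
  intro i
  have hρx : ∀ j, ρ i (x j) = √(1 + 3 * sin (θ j - θ i) ^ 2) := fun j => by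
    rw [hρ, hx, rotate_dilate_sq_cos_sin]
  refine ⟨by simp [hρx], fun j hji => ?_⟩
  have hθ_mem : ∀ k, θ k ∈ Set.Ico 0 π := fun k => by
    rw [hθ]
    exact natCast_mul_pi_div_mem_Ico (by omega)
  have hθ_ne : θ j ≠ θ i := by
    rw [hθ, hθ]
    exact (natCast_mul_pi_div_injective i.pos.ne').ne (Fin.val_ne_of_ne hji)
  have hsin := sin_sub_ne_zero_of_mem_Ico (hθ_mem j) (hθ_mem i) hθ_ne
  rw [hρx, lt_sqrt zero_le_one]
  linarith [sq_pos_of_ne_zero hsin]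

/-- Counterexample to a sample-dependent Stone's lemma: `n` points on the unit
circle such that each point `xᵢ` is the unique nearest neighbour of the origin
with respect to its own norm `ρᵢ` (rotation by `-θᵢ`, dilation of the second
coordinate by `2`, then the Euclidean norm). -/
theorem each_point_nearest_in_own_norm
    (n : ℕ) (hn : 0 < n)
    (θ : Fin n → ℝ) (hθ : ∀ i, θ i = (i : ℕ) * π / (2 * n))
    (x : Fin n → ℝ × ℝ) (hx : ∀ i, x i = (Real.cos (θ i), Real.sin (θ i)))
    (ρ : Fin n → ℝ × ℝ → ℝ)
    (hρ : ∀ i (v : ℝ × ℝ), ρ i v =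
      Real.sqrt ((v.1 * Real.cos (θ i) + v.2 * Real.sin (θ i)) ^ 2
        + 4 * (-v.1 * Real.sin (θ i) + v.2 * Real.cos (θ i)) ^ 2)) :
    ∀ i, ρ i (x i) = 1 ∧ ∀ j, j ≠ i → 1 < ρ i (x j) :=
  each_point_nearest_in_own_norm_general n θ hθ x hx ρ hρ
end

section
/- Let E be a real normed vector space, let α ≥ 1, 0 < β ≤ 1, γ > 0, r > 0 be constants, and let ρ : E → ℝ be an admissible distance with constants α, β, γ, r. Set δ = min(r, γ)/(4α). Then for all x, y ∈ E with ‖x‖ < δ and ‖y‖ < δ, one has ρ(x + y) ≤ (α/β)·(ρ(x) + ρ(y)). -/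
/-- `ρ` is an admissible distance on `E` with constants `α, β, γ, r`:
it vanishes at `0`, is `α`-Lipschitz on the closed ball of radius `r`,
is radially increasing with rate at least `β‖v‖` inside the ball of radius `r`,
is at least `γ` outside that ball, and is symmetric. -/
def IsAdmissibleDistance {E : Type*} [NormedAddCommGroup E] [NormedSpace ℝ E]
    (ρ : E → ℝ) (α β γ r : ℝ) : Prop :=
  ρ 0 = 0 ∧
  (∀ x y : E, ‖x‖ ≤ r → ‖y‖ ≤ r → |ρ x - ρ y| ≤ α * ‖x - y‖) ∧
  (∀ v : E, v ≠ 0 → ‖v‖ < r → ∀ t ∈ Set.Ioo (0 : ℝ) 1,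
    DifferentiableAt ℝ (fun s : ℝ => ρ (s • v)) t ∧
    β * ‖v‖ ≤ deriv (fun s : ℝ => ρ (s • v)) t) ∧
  (∀ v : E, r ≤ ‖v‖ → γ ≤ ρ v) ∧
  (∀ v : E, ρ (-v) = ρ v)

/-!
Near the origin an admissible distance is squeezed between two multiples of the norm:
`β‖v‖ ≤ ρ v` (integrate the radial derivative bound from `0` to `v`) and `ρ v ≤ α‖v‖`
(the Lipschitz bound against `ρ 0 = 0`). For `‖x‖, ‖y‖ < δ ≤ r/4` all of `x`, `y`, `x + y`
lie in the ball of radius `r`, so the triangle inequality for the norm gives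
`ρ (x + y) ≤ α (‖x‖ + ‖y‖) ≤ (α/β) (ρ x + ρ y)`.
-/

namespace IsAdmissibleDistance

variable {E : Type*} [NormedAddCommGroup E] [NormedSpace ℝ E] {ρ : E → ℝ} {α β γ r : ℝ}

open Metric Set

theorem le_mul_norm (hρ : IsAdmissibleDistance ρ α β γ r) {v : E} (hv : ‖v‖ ≤ r) :
    ρ v ≤ α * ‖v‖ := by
  have h := hρ.2.1 v 0 hv (by simpa using (norm_nonneg v).trans hv)
  rw [hρ.1, sub_zero, sub_zero] at h
  exact (abs_le.mp h).2

theorem continuousOn_closedBall (hρ : IsAdmissibleDistance ρ α β γ r) :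
    ContinuousOn ρ (closedBall 0 r) := by
  refine (LipschitzOnWith.of_dist_le' (K := α) fun x hx y hy => ?_).continuousOn
  rw [mem_closedBall_zero_iff] at hx hy
  rw [Real.dist_eq, dist_eq_norm]
  exact hρ.2.1 x y hx hy

theorem mul_norm_le (hρ : IsAdmissibleDistance ρ α β γ r) {v : E} (hv : ‖v‖ < r) :
    β * ‖v‖ ≤ ρ v := by
  rcases eq_or_ne v 0 with rfl | hv0
  · simp [hρ.1]
  have hder := hρ.2.2.1 v hv0 hv
  have hsegment : MapsTo (fun s : ℝ => s • v) (Icc 0 1) (closedBall 0 r) := fun s hs => by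
    rw [mem_closedBall_zero_iff, norm_smul, Real.norm_of_nonneg hs.1]
    nlinarith [hs.2, norm_nonneg v]
  have hcont : ContinuousOn (fun s : ℝ => ρ (s • v)) (Icc 0 1) :=
    hρ.continuousOn_closedBall.comp (by fun_prop) hsegment
  have h := (convex_Icc (0 : ℝ) 1).mul_sub_le_image_sub_of_le_deriv hcont
    (fun t ht => (hder t (by rwa [interior_Icc] at ht)).1.differentiableWithinAt)
    (fun t ht => (hder t (by rwa [interior_Icc] at ht)).2)
    0 (left_mem_Icc.mpr zero_le_one) 1 (right_mem_Icc.mpr zero_le_one) zero_le_one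
  simpa [hρ.1] using h

end IsAdmissibleDistance

theorem admissible_distance_weak_triangle_general
    {E : Type*} [NormedAddCommGroup E] [NormedSpace ℝ E]
    (α β γ r : ℝ) (hα : 1 ≤ α) (hβ0 : 0 < β)
    (ρ : E → ℝ) (hρ : IsAdmissibleDistance ρ α β γ r)
    (δ : ℝ) (hδ : δ = min r γ / (4 * α)) :
    ∀ x y : E, ‖x‖ < δ → ‖y‖ < δ → ρ (x + y) ≤ (α / β) * (ρ x + ρ y) := by
  intro x y hx hy
  have hmin : 0 < min r γ :=
    (div_pos_iff_of_pos_right (by positivity)).mp (hδ ▸ (norm_nonneg x).trans_lt hx)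
  have hr : 0 < r := (lt_min_iff.mp hmin).1
  have hδr : δ ≤ r / 4 := by
    rw [hδ]
    calc min r γ / (4 * α) ≤ r / (4 * α) := by gcongr; exact min_le_left r γ
      _ ≤ r / 4 := by gcongr; linarith
  have hxy : ‖x + y‖ ≤ r := by linarith [norm_add_le x y]
  calc ρ (x + y) ≤ α * ‖x + y‖ := hρ.le_mul_norm hxy
    _ ≤ α * (‖x‖ + ‖y‖) := by gcongr; exact norm_add_le x y
    _ = (α / β) * (β * ‖x‖ + β * ‖y‖) := by field_simp
    _ ≤ (α / β) * (ρ x + ρ y) := by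
      gcongr
      · exact hρ.mul_norm_le (by linarith)
      · exact hρ.mul_norm_le (by linarith)

/-- Weak triangle inequality for an admissible distance: with `δ = min(r,γ)/(4α)`,
for all `x, y` in the open ball of radius `δ` about `0`,
`ρ(x + y) ≤ (α/β)(ρ(x) + ρ(y))`. -/
theorem admissible_distance_weak_triangle
    {E : Type*} [NormedAddCommGroup E] [NormedSpace ℝ E]
    (α β γ r : ℝ) (hα : 1 ≤ α) (hβ0 : 0 < β) (hβ1 : β ≤ 1) (hγ : 0 < γ) (hr : 0 < r)
    (ρ : E → ℝ) (hρ : IsAdmissibleDistance ρ α β γ r)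
    (δ : ℝ) (hδ : δ = min r γ / (4 * α)) :
    ∀ x y : E, ‖x‖ < δ → ‖y‖ < δ → ρ (x + y) ≤ (α / β) * (ρ x + ρ y) :=
  admissible_distance_weak_triangle_general α β γ r hα hβ0 ρ hρ δ hδ
end

section
/- Let E be a finite-dimensional real normed vector space and let α ≥ 1, 0 < β ≤ 1, γ > 0, r > 0 be constants; set δ = min(r, γ)/(4α). Then there exists a positive integer c, depending only on E, the norm, and the constants α, β, such that for every admissible distance ρ : E → ℝ with constants α, β, γ, r, there exist subsets S₁, …, S_c of E whose union contains the open ball of radius δ about 0, such that for every i ∈ {1,…,c} and all x, y ∈ Sᵢ with x ≠ 0 and ρ(x) ≤ ρ(y), one has ρ(y − x) < ρ(y). -/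
section aux
variable {E : Type*} [NormedAddCommGroup E] [NormedSpace ℝ E]

/-- Mean value estimate along a ray. -/
lemma admissible_radial_step (ρ : E → ℝ) (α β r : ℝ) (hα : 1 ≤ α)
    (hlip : ∀ x y : E, ‖x‖ ≤ r → ‖y‖ ≤ r → |ρ x - ρ y| ≤ α * ‖x - y‖)
    (hrad : ∀ v : E, v ≠ 0 → ‖v‖ < r → ∀ t ∈ Set.Ioo (0 : ℝ) 1,
      DifferentiableAt ℝ (fun s : ℝ => ρ (s • v)) t ∧
      β * ‖v‖ ≤ deriv (fun s : ℝ => ρ (s • v)) t)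
    (x : E) (hx : x ≠ 0) (hxr : ‖x‖ < r) {a b : ℝ}
    (ha : 0 ≤ a) (hab : a < b) (hb : b ≤ 1) :
    β * ‖x‖ * (b - a) ≤ ρ (b • x) - ρ (a • x) := by
  set g : ℝ → ℝ := fun s => ρ (s • x) with hg
  have hαpos : (0:ℝ) < α := lt_of_lt_of_le one_pos hα
  have hcont : ContinuousOn g (Set.Icc a b) := by
    have hL : LipschitzOnWith (Real.toNNReal (α * ‖x‖)) g (Set.Icc a b) := by
      apply LipschitzOnWith.of_dist_le_mul
      intro s hs t ht
      have hnorm : ∀ u : ℝ, u ∈ Set.Icc a b → ‖u • x‖ ≤ r := by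
        intro u hu
        rw [norm_smul, Real.norm_eq_abs]
        have h1 : |u| ≤ 1 := by
          rw [abs_le]
          exact ⟨by linarith [hu.1], by linarith [hu.2]⟩
        calc |u| * ‖x‖ ≤ 1 * ‖x‖ :=
              mul_le_mul_of_nonneg_right h1 (norm_nonneg x)
          _ ≤ r := by rw [one_mul]; exact hxr.le
      have hls := hlip (s • x) (t • x) (hnorm s hs) (hnorm t ht)
      rw [Real.dist_eq, Real.dist_eq]
      calc |g s - g t| ≤ α * ‖s • x - t • x‖ := hls
        _ = (α * ‖x‖) * |s - t| := by
            rw [← sub_smul, norm_smul, Real.norm_eq_abs]; ring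
        _ ≤ (Real.toNNReal (α * ‖x‖) : ℝ) * |s - t| := by
            gcongr
            exact le_of_eq (Real.coe_toNNReal _
              (mul_nonneg hαpos.le (norm_nonneg x))).symm
    exact hL.continuousOn
  have hderiv : ∀ t ∈ Set.Ioo a b, HasDerivAt g (deriv g t) t := by
    intro t ht
    have ht' : t ∈ Set.Ioo (0:ℝ) 1 := ⟨lt_of_le_of_lt ha ht.1, lt_of_lt_of_le ht.2 hb⟩
    exact ((hrad x hx hxr t ht').1).hasDerivAt
  obtain ⟨c, hc, hceq⟩ := exists_hasDerivAt_eq_slope g (deriv g) hab hcont hderiv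
  have hc' : c ∈ Set.Ioo (0:ℝ) 1 := ⟨lt_of_le_of_lt ha hc.1, lt_of_lt_of_le hc.2 hb⟩
  have hlb : β * ‖x‖ ≤ (g b - g a) / (b - a) := by
    rw [← hceq]; exact (hrad x hx hxr c hc').2
  have hba : (0:ℝ) < b - a := sub_pos.2 hab
  calc β * ‖x‖ * (b - a) ≤ ((g b - g a) / (b - a)) * (b - a) := by gcongr
    _ = g b - g a := div_mul_cancel₀ _ hba.ne'

end aux


/-- Pure arithmetic endgame. -/
lemma admissible_arith (α β εv ρx ρy tv nd ny P Q : ℝ)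
    (hα : 1 ≤ α) (hβ0 : 0 < β) (hβ1 : β ≤ 1)
    (hεv : εv = β^2 / (4 * α^2))
    (hρx : 0 < ρx) (ht0 : 0 < tv)
    (hC : tv * ρy = ρx) (hEy : ρy ≤ α * ny)
    (hnd : nd < 2 * εv)
    (hA : P - Q ≤ α * (ρx * nd))
    (hB : β * ny * tv ≤ ρy - Q) : P < ρy := by
  have hαpos : (0:ℝ) < α := lt_of_lt_of_le one_pos hα
  have hstep : α * (ρx * nd) < β * ny * tv := by
    have s1 : α * (ρx * nd) < α * (ρx * (2 * εv)) := by
      apply mul_lt_mul_of_pos_left _ hαpos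
      exact mul_lt_mul_of_pos_left hnd hρx
    have s2 : α * (ρx * (2 * εv)) = ρx * β^2 / (2 * α) := by
      rw [hεv]; field_simp; ring
    have s3 : ρx * β^2 / (2 * α) ≤ ρx * β / α := by
      rw [div_le_div_iff₀ (by positivity) hαpos]
      have hb2 : β^2 ≤ β := by nlinarith
      nlinarith [mul_le_mul_of_nonneg_left hb2 (mul_nonneg hρx.le hαpos.le),
        mul_nonneg (mul_nonneg hρx.le hβ0.le) hαpos.le]
    have s4 : ρx * β / α ≤ β * ny * tv := by
      rw [div_le_iff₀ hαpos]
      nlinarith [mul_nonneg (mul_nonneg hβ0.le ht0.le) (sub_nonneg.2 hEy)]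
    linarith
  linarith

/-- Cone covering for a uniformly locally Lipschitz family of distances: on a
finite-dimensional space there is a constant `c`, depending only on the space,
the norm, `α`, and `β`, such that for every admissible distance `ρ` (with any
constants `γ, r`) there are `c` subsets covering the ball of radius
`δ = min(r,γ)/(4α)` about `0`, each with the `ρ`-contraction property. -/
theorem admissible_distance_cone_covering
    {E : Type*} [NormedAddCommGroup E] [NormedSpace ℝ E] [FiniteDimensional ℝ E]
    (α β : ℝ) (hα : 1 ≤ α) (hβ0 : 0 < β) (hβ1 : β ≤ 1) :
    ∃ c : ℕ, 0 < c ∧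
      ∀ γ r : ℝ, 0 < γ → 0 < r →
        ∀ ρ : E → ℝ, IsAdmissibleDistance ρ α β γ r →
          ∃ S : Fin c → Set E,
            Metric.ball (0 : E) (min r γ / (4 * α)) ⊆ (⋃ i, S i) ∧
            ∀ i, ∀ x ∈ S i, ∀ y ∈ S i, x ≠ 0 → ρ x ≤ ρ y → ρ (y - x) < ρ y := by
  have hαpos : (0:ℝ) < α := lt_of_lt_of_le one_pos hα
  set ε : ℝ := β^2 / (4 * α^2) with hεdef
  have hε : 0 < ε := by positivity
  obtain ⟨T, hT⟩ : ∃ T : Finset E,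
      Metric.closedBall (0:E) (1/β) ⊆ ⋃ p ∈ T, Metric.ball p ε := by
    have hcompact : IsCompact (Metric.closedBall (0:E) (1/β)) :=
      isCompact_closedBall _ _
    obtain ⟨T, hT⟩ := hcompact.elim_finite_subcover (fun p : E => Metric.ball p ε)
      (fun p => Metric.isOpen_ball)
      (fun q _ => Set.mem_iUnion.2 ⟨q, Metric.mem_ball_self hε⟩)
    exact ⟨T, hT⟩
  have hTne : T.Nonempty := by
    have h0m : (0:E) ∈ Metric.closedBall (0:E) (1/β) :=
      Metric.mem_closedBall_self (by positivity)
    have := hT h0m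
    simp only [Set.mem_iUnion, exists_prop] at this
    obtain ⟨p, hp, -⟩ := this
    exact ⟨p, hp⟩
  refine ⟨T.card, Finset.card_pos.2 hTne, ?_⟩
  intro γ r hγ hr ρ hadm
  obtain ⟨h0, hlip, hrad, hout, hsym⟩ := hadm
  set δ : ℝ := min r γ / (4 * α) with hδdef
  have hδr : δ ≤ r / (4 * α) := by
    apply div_le_div_of_nonneg_right (min_le_left r γ) (by positivity)
  have hδr' : 2 * δ ≤ r := by
    have h4 : r / (4*α) ≤ r / 4 :=
      div_le_div_of_nonneg_left hr.le (by norm_num) (by linarith)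
    nlinarith
  have hδltr : δ < r := by nlinarith
  have hlow : ∀ x : E, x ≠ 0 → ‖x‖ < r → β * ‖x‖ ≤ ρ x := by
    intro x hx hxr
    have := admissible_radial_step ρ α β r hα hlip hrad x hx hxr
      (a := 0) (b := 1) le_rfl one_pos le_rfl
    simpa [h0] using this
  have hupp : ∀ x : E, ‖x‖ ≤ r → ρ x ≤ α * ‖x‖ := by
    intro x hxr
    have := hlip x 0 hxr (by simp [hr.le])
    rw [h0, sub_zero, sub_zero] at this
    exact (abs_le.1 this).2
  set u : E → E := fun x => (ρ x)⁻¹ • x with hu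
  let e : T ≃ Fin T.card := T.equivFin
  refine ⟨fun i => {x : E | ‖x‖ < δ ∧ (u x ∈ Metric.ball (e.symm i : E) ε ∨ x = 0)},
    ?_, ?_⟩
  · intro x hx
    rw [Metric.mem_ball, dist_zero_right] at hx
    by_cases hx0 : x = 0
    · obtain ⟨p, hp⟩ := hTne
      exact Set.mem_iUnion.2 ⟨e ⟨p, hp⟩, ⟨hx, Or.inr hx0⟩⟩
    · have hxr : ‖x‖ < r := lt_of_lt_of_le hx (le_of_lt hδltr)
      have hρx : 0 < ρ x := by
        have := hlow x hx0 hxr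
        have hxn : 0 < ‖x‖ := norm_pos_iff.2 hx0
        nlinarith
      have hub : ‖u x‖ ≤ 1/β := by
        have heq : ‖u x‖ = ‖x‖ / ρ x := by
          rw [hu]
          simp only [norm_smul, norm_inv, Real.norm_eq_abs, abs_of_pos hρx]
          rw [div_eq_inv_mul]
        rw [heq, div_le_div_iff₀ hρx hβ0]
        have := hlow x hx0 hxr
        linarith
      have hmem : u x ∈ Metric.closedBall (0:E) (1/β) := by
        rw [Metric.mem_closedBall, dist_zero_right]; exact hub
      have := hT hmem
      simp only [Set.mem_iUnion, exists_prop] at this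
      obtain ⟨p, hpT, hpball⟩ := this
      refine Set.mem_iUnion.2 ⟨e ⟨p, hpT⟩, ⟨hx, Or.inl ?_⟩⟩
      simpa [Equiv.symm_apply_apply] using hpball
  · intro i x hxS y hyS hx0 hρxy
    obtain ⟨hxδ, hxB⟩ := hxS
    obtain ⟨hyδ, hyB⟩ := hyS
    have hxr : ‖x‖ < r := lt_trans hxδ hδltr
    have hρx : 0 < ρ x := by
      have := hlow x hx0 hxr
      have hxn : 0 < ‖x‖ := norm_pos_iff.2 hx0
      nlinarith
    have hy0 : y ≠ 0 := by
      intro h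
      rw [h, h0] at hρxy
      linarith
    have hyr : ‖y‖ < r := lt_trans hyδ hδltr
    have hρy : 0 < ρ y := lt_of_lt_of_le hρx hρxy
    have hxB' : u x ∈ Metric.ball (e.symm i : E) ε := hxB.resolve_right hx0
    have hyB' : u y ∈ Metric.ball (e.symm i : E) ε := hyB.resolve_right hy0
    set t : ℝ := ρ x / ρ y with htdef
    have ht0 : 0 < t := div_pos hρx hρy
    have ht1 : t ≤ 1 := (div_le_one hρy).2 hρxy
    have h1 : (ρ x) • u x = x := by
      rw [hu]
      simp only []
      rw [smul_smul, mul_inv_cancel₀ hρx.ne', one_smul]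
    have h2 : (ρ x) • u y = t • y := by
      rw [hu]
      simp only []
      rw [smul_smul, htdef, div_eq_mul_inv]
    have key : y - x = (1 - t) • y + (ρ x) • (u y - u x) := by
      rw [smul_sub, h1, h2, sub_smul, one_smul]; abel
    set d : E := u y - u x with hd
    have hdlt : ‖d‖ < 2 * ε := by
      have hDD : dist (u y) (u x) < 2 * ε := by
        rw [Metric.mem_ball] at hxB' hyB'
        calc dist (u y) (u x)
            ≤ dist (u y) (e.symm i : E) + dist (e.symm i : E) (u x) :=
              dist_triangle _ _ _
          _ < ε + ε := by
              apply add_lt_add hyB'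
              rw [dist_comm]; exact hxB'
          _ = 2 * ε := by ring
      rwa [dist_eq_norm] at hDD
    have hyx_r : ‖y - x‖ ≤ r := by
      calc ‖y - x‖ ≤ ‖y‖ + ‖x‖ := norm_sub_le _ _
        _ ≤ 2 * δ := by linarith
        _ ≤ r := hδr'
    have hty_r : ‖(1 - t) • y‖ ≤ r := by
      rw [norm_smul, Real.norm_eq_abs, abs_of_nonneg (by linarith : (0:ℝ) ≤ 1 - t)]
      calc (1 - t) * ‖y‖ ≤ 1 * ‖y‖ := by
            apply mul_le_mul_of_nonneg_right _ (norm_nonneg y); linarith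
        _ ≤ r := by rw [one_mul]; exact hyr.le
    have hA : ρ (y - x) - ρ ((1 - t) • y) ≤ α * (ρ x * ‖d‖) := by
      have hls := hlip (y - x) ((1 - t) • y) hyx_r hty_r
      have heq : ‖(y - x) - (1 - t) • y‖ = ρ x * ‖d‖ := by
        rw [key]
        simp only [add_sub_cancel_left]
        rw [norm_smul, Real.norm_eq_abs, abs_of_pos hρx]
      rw [heq] at hls
      exact le_trans (le_abs_self _) hls
    have hB : β * ‖y‖ * t ≤ ρ y - ρ ((1 - t) • y) := by
      have := admissible_radial_step ρ α β r hα hlip hrad y hy0 hyr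
        (a := 1 - t) (b := 1) (by linarith) (by linarith) le_rfl
      simpa using this
    have hEy : ρ y ≤ α * ‖y‖ := hupp y hyr.le
    have hC : t * ρ y = ρ x := div_mul_cancel₀ _ hρy.ne'
    exact admissible_arith α β ε (ρ x) (ρ y) t ‖d‖ ‖y‖ (ρ (y - x)) (ρ ((1 - t) • y))
      hα hβ0 hβ1 hεdef hρx ht0 hC hEy hdlt hA hB
end
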